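/- arXiv:2008.01997 — 3 statements merged into one kernel-verified Lean document; each statement's English description precedes it below -/
import Mathlib

section
/- For integers m₁, m₂ and φ continuous with compact support, (Z ρ(m₁, m₂, e^{πi m₁ m₂}) φ)(θ,σ) = e^{2πi m₂ σ}·e^{2πi m₁ θ}·(Zφ)(θ,σ); that is, the Zak transform intertwines ρ(m₁,m₂,e^{πi m₁ m₂}) with multiplication by the character e^{2πi(m₁θ + m₂σ)}. -/
open Complex

/-- The Schrödinger representation acting pointwise:
`(ρ(x,y,z)φ)(t) = z e^{πi(xy+2yt)} φ(t+x)`. -/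
noncomputable def rho (x y : ℝ) (z : ℂ) (φ : ℝ → ℂ) : ℝ → ℂ := fun t =>
  z * Complex.exp (Real.pi * Complex.I * (x * y + 2 * y * t)) * φ (t + x)

/-- The Zak transform `(Zφ)(θ,σ) = Σ_{l∈ℤ} φ(σ-l) e^{2πilθ}`. -/
noncomputable def zak (φ : ℝ → ℂ) (θ σ : ℝ) : ℂ :=
  ∑' l : ℤ, φ (σ - l) * Complex.exp (2 * Real.pi * Complex.I * l * θ)

/-- For integers `m₁, m₂`, the Zak transform intertwines `ρ(m₁, m₂, e^{πi m₁ m₂})` with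
multiplication by the character `e^{2πi(m₁θ + m₂σ)}`. -/
theorem stmt_10 (φ : ℝ → ℂ) (hφc : Continuous φ) (hφs : HasCompactSupport φ)
    (m₁ m₂ : ℤ) (θ σ : ℝ) :
    zak (rho (m₁ : ℝ) (m₂ : ℝ) (Complex.exp (Real.pi * Complex.I * (m₁ * m₂))) φ) θ σ =
      Complex.exp (2 * Real.pi * Complex.I * m₂ * σ) *
        Complex.exp (2 * Real.pi * Complex.I * m₁ * θ) * zak φ θ σ := by
  set g : ℤ → ℂ := fun k => φ (σ - k) * Complex.exp (2 * Real.pi * Complex.I * k * θ) with hg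
  set C : ℂ := Complex.exp (2 * Real.pi * Complex.I * m₂ * σ) *
      Complex.exp (2 * Real.pi * Complex.I * m₁ * θ) with hC
  have key : ∀ l : ℤ,
      rho (m₁ : ℝ) (m₂ : ℝ) (Complex.exp (Real.pi * Complex.I * (m₁ * m₂))) φ (σ - l) *
        Complex.exp (2 * Real.pi * Complex.I * l * θ) = C * g (l - m₁) := by
    intro l
    have harg : σ - (l : ℝ) + (m₁ : ℝ) = σ - ((l - m₁ : ℤ) : ℝ) := by push_cast; ring
    simp only [rho, hg, hC, harg]
    have hexp : Complex.exp ((Real.pi : ℂ) * Complex.I * ((m₁ : ℝ) * (m₂ : ℝ))) *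
        Complex.exp ((Real.pi : ℂ) * Complex.I *
          ((m₁ : ℝ) * (m₂ : ℝ) + 2 * (m₂ : ℝ) * ((σ - l : ℝ) : ℂ))) *
        Complex.exp (2 * (Real.pi : ℂ) * Complex.I * (l : ℂ) * θ) =
        Complex.exp (2 * (Real.pi : ℂ) * Complex.I * (m₂ : ℂ) * σ) *
        Complex.exp (2 * (Real.pi : ℂ) * Complex.I * (m₁ : ℂ) * θ) *
        Complex.exp (2 * (Real.pi : ℂ) * Complex.I * (((l - m₁ : ℤ) : ℝ) : ℂ) * θ) := by
      rw [← Complex.exp_add, ← Complex.exp_add, ← Complex.exp_add, ← Complex.exp_add,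
        Complex.exp_eq_exp_iff_exists_int]
      exact ⟨m₁ * m₂ - m₂ * l, by push_cast; ring⟩
    calc Complex.exp ((Real.pi : ℂ) * Complex.I * ((m₁ : ℝ) * (m₂ : ℝ))) *
          Complex.exp ((Real.pi : ℂ) * Complex.I *
            ((m₁ : ℝ) * (m₂ : ℝ) + 2 * (m₂ : ℝ) * ((σ - l : ℝ) : ℂ))) *
          φ (σ - ((l - m₁ : ℤ) : ℝ)) * Complex.exp (2 * (Real.pi : ℂ) * Complex.I * (l : ℂ) * θ)
        = (Complex.exp ((Real.pi : ℂ) * Complex.I * ((m₁ : ℝ) * (m₂ : ℝ))) *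
          Complex.exp ((Real.pi : ℂ) * Complex.I *
            ((m₁ : ℝ) * (m₂ : ℝ) + 2 * (m₂ : ℝ) * ((σ - l : ℝ) : ℂ))) *
          Complex.exp (2 * (Real.pi : ℂ) * Complex.I * (l : ℂ) * θ)) *
          φ (σ - ((l - m₁ : ℤ) : ℝ)) := by ring
      _ = _ := by rw [hexp]; push_cast; ring
  calc zak (rho (m₁ : ℝ) (m₂ : ℝ) (Complex.exp (Real.pi * Complex.I * (m₁ * m₂))) φ) θ σ
      = ∑' l : ℤ, C * g (l - m₁) := tsum_congr key
    _ = C * ∑' l : ℤ, g (l - m₁) := tsum_mul_left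
    _ = C * ∑' l : ℤ, g l := congrArg (fun s => C * s) ((Equiv.subRight m₁).tsum_eq g)
    _ = C * zak φ θ σ := rfl
end

section
/- Let Σ be a measurable space, m < n natural numbers, and e₁,…,e_m : Σ → ℂⁿ measurable functions. Then there exists a measurable function e : Σ → ℂⁿ such that ‖e(x)‖ = 1 and ⟨e_j(x), e(x)⟩ = 0 for all x ∈ Σ and j = 1,…,m. -/
/-!
Gram–Schmidt applied to `u₁(x), …, u_m(x), v` ends with the component of `v` orthogonal to the
`u_j(x)`, and every step of the process is an explicit measurable formula in `x`. Letting `v`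
run through a dense sequence, some of these components is nonzero, because the span of the
`u_j(x)` is a closed proper subspace. The first nonzero one is a countable piecewise choice,
hence measurable, and normalising it gives the required vector.
-/

open InnerProductSpace Submodule Set

section

variable {𝕜 E S : Type*} [RCLike 𝕜] [NormedAddCommGroup E] [InnerProductSpace 𝕜 E]

namespace InnerProductSpace

variable {ι : Type*} [LinearOrder ι] [LocallyFiniteOrderBot ι] [WellFoundedLT ι]

theorem mem_span_of_gramSchmidt_eq_zero (f : ι → E) {i : ι} (h : gramSchmidt 𝕜 f i = 0) :
    f i ∈ span 𝕜 (f '' Iio i) := by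
  rw [← span_gramSchmidt_Iio 𝕜 f i, gramSchmidt_def' 𝕜 f i, h, zero_add]
  refine sum_mem fun j hj => ?_
  rw [starProjection_singleton]
  exact smul_mem _ _ (subset_span (mem_image_of_mem _ (Finset.mem_Iio.1 hj)))

theorem measurable_gramSchmidt [MeasurableSpace S] [MeasurableSpace E] [BorelSpace E]
    [SecondCountableTopology E] {f : S → ι → E} (hf : ∀ i, Measurable fun x => f x i) (i : ι) :
    Measurable fun x => gramSchmidt 𝕜 (f x) i := by
  induction i using WellFoundedLT.induction with
  | _ i ih =>
    simp_rw [gramSchmidt_def 𝕜 _ i, starProjection_singleton]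
    refine (hf i).sub (Finset.measurable_sum _ fun j hj => ?_)
    have hj := ih j (Finset.mem_Iio.1 hj)
    exact ((hj.inner (hf i)).div (RCLike.measurable_ofReal.comp (hj.norm.pow_const 2))).smul hj

end InnerProductSpace

/-- The component of `v` orthogonal to all the `u j`. -/
noncomputable def orthogonalPart {m : ℕ} (u : Fin m → E) (v : E) : E :=
  gramSchmidt 𝕜 (Fin.snoc u v : Fin (m + 1) → E) (Fin.last m)

section orthogonalPart

variable {m : ℕ}

theorem inner_orthogonalPart (u : Fin m → E) (v : E) (j : Fin m) :
    inner 𝕜 (u j) (orthogonalPart (𝕜 := 𝕜) u v) = 0 := by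
  rw [inner_eq_zero_symm, orthogonalPart]
  simpa using gramSchmidt_inv_triangular 𝕜 (Fin.snoc u v : Fin (m + 1) → E) j.castSucc_lt_last

theorem orthogonalPart_ne_zero {u : Fin m → E} {v : E} (hv : v ∉ span 𝕜 (range u)) :
    orthogonalPart (𝕜 := 𝕜) u v ≠ 0 := by
  intro h
  refine hv (span_mono ?_ (by simpa using mem_span_of_gramSchmidt_eq_zero _ h))
  rintro _ ⟨i, hi, rfl⟩
  obtain ⟨j, rfl⟩ := Fin.exists_castSucc_eq.2 (Fin.lt_last_iff_ne_last.1 hi)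
  exact ⟨j, by simp⟩

variable [MeasurableSpace S] [MeasurableSpace E] [BorelSpace E] [SecondCountableTopology E]

theorem Measurable.orthogonalPart {u : Fin m → S → E} {v : S → E} (hu : ∀ j, Measurable (u j))
    (hv : Measurable v) : Measurable fun x => orthogonalPart (𝕜 := 𝕜) (u · x) (v x) := by
  refine measurable_gramSchmidt (fun i => ?_) _
  induction i using Fin.lastCases with
  | last => simpa using hv
  | cast j => simpa using hu j

theorem exists_measurable_unit_orthogonal {u : Fin m → S → E} (hu : ∀ j, Measurable (u j))
    (hspan : ∀ x, span 𝕜 (range (u · x)) ≠ ⊤) :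
    ∃ f : S → E, Measurable f ∧ (∀ x, ‖f x‖ = 1) ∧ ∀ x j, inner 𝕜 (u j x) (f x) = 0 := by
  classical
  set w : ℕ → S → E := fun k x =>
    orthogonalPart (𝕜 := 𝕜) (u · x) (TopologicalSpace.denseSeq E k)
  have hw : ∀ k, Measurable (w k) := fun k => .orthogonalPart hu measurable_const
  have hex : ∀ x, ∃ k, w k x ≠ 0 := by
    intro x
    have := FiniteDimensional.span_of_finite 𝕜 (finite_range (u · x))
    obtain ⟨k, hk⟩ := (TopologicalSpace.denseRange_denseSeq E).exists_mem_open
      (closed_of_finiteDimensional _).isOpen_compl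
      (nonempty_compl.2 fun h => hspan x (Submodule.coe_eq_univ.1 h))
    exact ⟨k, orthogonalPart_ne_zero hk⟩
  refine ⟨fun x => (‖w (Nat.find (hex x)) x‖ : 𝕜)⁻¹ • w (Nat.find (hex x)) x,
    Measurable.find (fun k => (RCLike.measurable_ofReal.comp (hw k).norm).inv.smul (hw k))
      (fun k => (hw k (measurableSet_singleton 0)).compl) hex,
    fun x => norm_smul_inv_norm (Nat.find_spec (hex x)), fun x j => ?_⟩
  rw [inner_smul_right]
  exact mul_eq_zero_of_right _ (inner_orthogonalPart (u · x) _ j)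

end orthogonalPart

end

/-- Measurable selection of a unit vector orthogonal to `m < n` measurable families of
vectors in `ℂⁿ`. -/
theorem stmt_11 {S : Type*} [MeasurableSpace S] (m n : ℕ) (hmn : m < n)
    [MeasurableSpace (EuclideanSpace ℂ (Fin n))] [BorelSpace (EuclideanSpace ℂ (Fin n))]
    (e : Fin m → S → EuclideanSpace ℂ (Fin n)) (he : ∀ j, Measurable (e j)) :
    ∃ f : S → EuclideanSpace ℂ (Fin n), Measurable f ∧
      (∀ x, ‖f x‖ = 1) ∧ ∀ x, ∀ j, inner ℂ (e j x) (f x) = (0 : ℂ) := by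
  refine exists_measurable_unit_orthogonal he fun x htop => hmn.not_ge ?_
  calc n = Module.finrank ℂ (span ℂ (range (e · x))) := by
        rw [htop, finrank_top, finrank_euclideanSpace_fin]
    _ ≤ m := (finrank_range_le_card (R := ℂ) (e · x)).trans_eq (Fintype.card_fin m)
end

section
/- Let N = ℤ × aℤ for a positive integer a, let ρ be the Schrödinger representation, τ Linnell's trace on the N-periodic von Neumann algebra A_N given by τ(T) = Σ_{h=0}^{a-1} ⟨T χ_h, χ_h⟩, and for g ∈ L¹([0,1)²) let M_g = Z^{-1}(g·Z·). Then for k,l ∈ ℤ, the Fourier–Wigner coefficient τ(M_g ρ(-k/a, -l, 1)) equals e^{πilk/a}·∫_{[0,1)²} g(θ,σ) e^{-2πi(lσ + kθ/a)} dθ dσ if a divides k, and equals 0 otherwise. -/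
open Complex MeasureTheory

/-- Lebesgue measure on the fundamental square `Ω = [0,1) × [0,1)`. -/
noncomputable def muOmega : Measure (ℝ × ℝ) :=
  (volume : Measure (ℝ × ℝ)).restrict (Set.Ico (0 : ℝ) 1 ×ˢ Set.Ico (0 : ℝ) 1)

/-- The indicator function `χ_h` of `[h/a, (h+1)/a)`. -/
noncomputable def chi (a h : ℕ) : ℝ → ℂ :=
  (Set.Ico ((h : ℝ) / a) (((h : ℝ) + 1) / a)).indicator fun _ => (1 : ℂ)

/-! On `[0,1)` the Zak transform of `χ_h` is `χ_h` itself, so the `h`-th summand is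
`∫ g · Z(ρχ_h) · χ_h`. For `σ ∈ [h/a, (h+1)/a)` the `m`-th term of `Z(ρχ_h)(θ,σ)` carries the
factor `χ_h(σ - (ma+k)/a)`, which vanishes unless `ma + k = 0`, since `⌊σa⌋ = h` pins down
the shift. So nothing survives when `a ∤ k`, and for `k = aq` only `m = -q` does, contributing
`e^{πilk/a} e^{-2πi(lσ + kθ/a)} χ_h(σ)`; finally the `χ_h` add up to `1` on `[0,1)`. -/

lemma mem_Ico_div_iff_floor_eq {a : ℕ} (ha : 0 < a) (h : ℕ) (σ : ℝ) :
    σ ∈ Set.Ico ((h : ℝ) / a) (((h : ℝ) + 1) / a) ↔ ⌊σ * a⌋ = h := by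
  have ha' : (0 : ℝ) < a := by exact_mod_cast ha
  rw [Int.floor_eq_iff, Set.mem_Ico, div_le_iff₀ ha', lt_div_iff₀ ha']
  push_cast
  rfl

lemma chi_eq_ite {a : ℕ} (ha : 0 < a) (h : ℕ) (σ : ℝ) :
    chi a h σ = if ⌊σ * a⌋ = h then 1 else 0 := by
  simp only [chi, Set.indicator_apply, mem_Ico_div_iff_floor_eq ha]

lemma chi_eq_zero_of_notMem_Ico {a h : ℕ} (hh : h < a) {σ : ℝ} (hσ : σ ∉ Set.Ico (0 : ℝ) 1) :
    chi a h σ = 0 := by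
  rw [chi_eq_ite (by omega)]
  refine if_neg fun hfloor => hσ ?_
  have ha' : (0 : ℝ) < a := by exact_mod_cast (show 0 < a by omega)
  have h_lt : (h : ℝ) + 1 ≤ a := by exact_mod_cast hh
  obtain ⟨hlo, hhi⟩ := Int.floor_eq_iff.mp hfloor
  push_cast at hlo hhi
  constructor <;> nlinarith

lemma sum_chi_eq_one {a : ℕ} (ha : 0 < a) {σ : ℝ} (hσ : σ ∈ Set.Ico (0 : ℝ) 1) :
    ∑ h ∈ Finset.range a, chi a h σ = 1 := by
  have ha' : (0 : ℝ) < a := by exact_mod_cast ha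
  obtain ⟨n, hn⟩ := Int.eq_ofNat_of_zero_le (Int.floor_nonneg.mpr (by nlinarith [hσ.1]) :
    0 ≤ ⌊σ * a⌋)
  have hna : n < a := by
    have : ⌊σ * a⌋ < a := Int.floor_lt.mpr (by push_cast; nlinarith [hσ.2])
    omega
  simp_rw [chi_eq_ite ha, hn, Nat.cast_inj]
  rw [Finset.sum_ite_eq, if_pos (Finset.mem_range.mpr hna)]

lemma conj_chi (a h : ℕ) (σ : ℝ) : (starRingEnd ℂ) (chi a h σ) = chi a h σ := by
  by_cases hσ : σ ∈ Set.Ico ((h : ℝ) / a) (((h : ℝ) + 1) / a) <;> simp [chi, hσ]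

lemma zak_eq_self_of_eq_zero_off_Ico {φ : ℝ → ℂ} (hφ : ∀ x ∉ Set.Ico (0 : ℝ) 1, φ x = 0)
    (θ : ℝ) {σ : ℝ} (hσ : σ ∈ Set.Ico (0 : ℝ) 1) : zak φ θ σ = φ σ := by
  rw [zak, tsum_eq_single 0 fun m hm => ?_]
  · simp
  rw [hφ, zero_mul]
  intro hmem
  have := Int.floor_eq_zero_iff.mpr hmem
  rw [Int.floor_sub_intCast, Int.floor_eq_zero_iff.mpr hσ] at this
  omega

lemma chi_sub_div_eq_zero {a : ℕ} (ha : 0 < a) {h : ℕ} {σ : ℝ}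
    (hσ : σ ∈ Set.Ico ((h : ℝ) / a) (((h : ℝ) + 1) / a)) {n : ℤ} (hn : n ≠ 0) :
    chi a h (σ - n / a) = 0 := by
  have ha' : (a : ℝ) ≠ 0 := by positivity
  rw [chi_eq_ite ha, if_neg]
  rw [mem_Ico_div_iff_floor_eq ha] at hσ
  rw [sub_mul, div_mul_cancel₀ _ ha', Int.floor_sub_intCast, hσ]
  omega

lemma zak_rho_chi_mul_chi {a : ℕ} (ha : 0 < a) (h : ℕ) (k l : ℤ) (θ σ : ℝ) :
    zak (rho (-(k : ℝ) / a) (-(l : ℝ)) 1 (chi a h)) θ σ * chi a h σ =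
      if (a : ℤ) ∣ k then
        Complex.exp (Real.pi * Complex.I * l * k / a) *
          (Complex.exp (-(2 * Real.pi * Complex.I * (l * σ + k * θ / a))) * chi a h σ)
      else 0 := by
  by_cases hσ : σ ∈ Set.Ico ((h : ℝ) / a) (((h : ℝ) + 1) / a)
  swap
  · simp [chi, hσ]
  have ha' : (a : ℝ) ≠ 0 := by positivity
  have hchi : chi a h σ = 1 := by simp [chi, hσ]
  have hshift (m : ℤ) : σ - m + -(k : ℝ) / a = σ - ((m * a + k : ℤ) : ℝ) / a := by
    push_cast; field_simp; ring
  have hterm (m : ℤ) (hm : m * a + k ≠ 0) :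
      rho (-(k : ℝ) / a) (-(l : ℝ)) 1 (chi a h) (σ - m) *
        Complex.exp (2 * Real.pi * Complex.I * m * θ) = 0 := by
    rw [rho, hshift, chi_sub_div_eq_zero ha hσ hm, mul_zero, zero_mul]
  rw [hchi, mul_one, mul_one, zak]
  split_ifs with hk
  · obtain ⟨q, rfl⟩ := hk
    rw [tsum_eq_single (-q) fun m hm => hterm m fun h0 => hm (by
      have : (a : ℤ) * (m + q) = 0 := by linear_combination h0
      simpa [ha.ne', add_eq_zero_iff_eq_neg] using this)]
    rw [rho, hshift, show (-q * a + a * q : ℤ) = 0 by ring, Int.cast_zero, zero_div, sub_zero, hchi,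
      one_mul, mul_one, ← Complex.exp_add, ← Complex.exp_add, Complex.exp_eq_exp_iff_exists_int]
    -- the two phases differ by `e^{-2πi lq} = 1`
    refine ⟨-(l * q), ?_⟩
    have haC : (a : ℂ) ≠ 0 := by exact_mod_cast ha'
    push_cast
    field_simp
    ring
  · simp_rw [fun m => hterm m fun h0 => hk ⟨-m, by linear_combination h0⟩, tsum_zero]

lemma integrable_mul_exp_mul_chi {μ : Measure (ℝ × ℝ)} {g : ℝ × ℝ → ℂ} (hg : Integrable g μ)
    (a h : ℕ) (k l : ℤ) :
    Integrable (fun p : ℝ × ℝ => g p *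
      (Complex.exp (-(2 * Real.pi * Complex.I * (l * p.2 + k * p.1 / a))) * chi a h p.2)) μ := by
  refine hg.mul_bdd (c := 1) ?_ (ae_of_all _ fun p => ?_)
  · exact ((by fun_prop : Measurable fun p : ℝ × ℝ =>
      Complex.exp (-(2 * Real.pi * Complex.I * (l * p.2 + k * p.1 / a)))).mul
      ((measurable_const.indicator measurableSet_Ico).comp measurable_snd)).aestronglyMeasurable
  · rw [norm_mul, Complex.norm_exp]
    by_cases hσ : p.2 ∈ Set.Ico ((h : ℝ) / a) (((h : ℝ) + 1) / a) <;> simp [chi, hσ]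

/-- The Fourier–Wigner coefficient `τ(M_g ρ(-k/a, -l, 1))`, with Linnell's trace
`τ(T) = Σ_{h=0}^{a-1} ⟨Tχ_h, χ_h⟩`, equals
`e^{πilk/a} ∫_Ω g(θ,σ) e^{-2πi(lσ + kθ/a)} dθ dσ` if `a ∣ k`, and `0` otherwise. -/
theorem stmt_14 (a : ℕ) (ha : 0 < a) (g : ℝ × ℝ → ℂ) (hg : Integrable g muOmega)
    (k l : ℤ) :
    (∑ h ∈ Finset.range a, ∫ p : ℝ × ℝ,
        g p * zak (rho (-(k : ℝ) / a) (-(l : ℝ)) 1 (chi a h)) p.1 p.2 *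
          (starRingEnd ℂ) (zak (chi a h) p.1 p.2) ∂muOmega) =
      if (a : ℤ) ∣ k then
        Complex.exp (Real.pi * Complex.I * l * k / a) *
          ∫ p : ℝ × ℝ,
            g p * Complex.exp (-(2 * Real.pi * Complex.I * (l * p.2 + k * p.1 / a))) ∂muOmega
      else 0 := by
  have hΩ : MeasurableSet (Set.Ico (0 : ℝ) 1 ×ˢ Set.Ico (0 : ℝ) 1) :=
    measurableSet_Ico.prod measurableSet_Ico
  have hterm (h : ℕ) (hh : h ∈ Finset.range a) :
      ∫ p : ℝ × ℝ, g p * zak (rho (-(k : ℝ) / a) (-(l : ℝ)) 1 (chi a h)) p.1 p.2 *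
          (starRingEnd ℂ) (zak (chi a h) p.1 p.2) ∂muOmega =
        ∫ p : ℝ × ℝ, (if (a : ℤ) ∣ k then Complex.exp (Real.pi * Complex.I * l * k / a) *
          (g p * (Complex.exp (-(2 * Real.pi * Complex.I * (l * p.2 + k * p.1 / a))) *
            chi a h p.2)) else 0) ∂muOmega := by
    refine setIntegral_congr_fun hΩ fun p hp => ?_
    have hchi_off x (hx : x ∉ Set.Ico (0 : ℝ) 1) : chi a h x = 0 :=
      chi_eq_zero_of_notMem_Ico (Finset.mem_range.mp hh) hx
    rw [zak_eq_self_of_eq_zero_off_Ico hchi_off p.1 hp.2, conj_chi, mul_assoc,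
      zak_rho_chi_mul_chi ha]
    split_ifs <;> ring
  rw [Finset.sum_congr rfl hterm]
  split_ifs with hk
  · rw [← integral_finsetSum _ fun h _ => (integrable_mul_exp_mul_chi hg a h k l).const_mul _]
    rw [← integral_const_mul]
    refine setIntegral_congr_fun hΩ fun p hp => ?_
    simp only [← Finset.mul_sum, sum_chi_eq_one ha hp.2, mul_one]
  · simp
end
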